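/- Let R = ℂ[x,y,t]/(t² − f) where f ∈ ℂ[x,y], and let f₁, f₂ ∈ ℂ[x,y] with f ∈ (f₁, f₂) in ℂ[x,y]. Let I₁ = (f₁, f₂) and I₂ = (f₁, f₂, t) as ideals of R. Then the colon ideal [I₁ : I₂] equals (f₁, f₂, t). -/

import Mathlib

/-!
Write `A` for the base ring, `a = (f₁, f₂)` and `t` for the class of `X`. Since `f ∈ a`, we have
`t² = f ∈ I₁`, so `I₂ * I₂ ≤ I₁` and hence `I₂ ≤ [I₁ : I₂]`. Conversely, let `r t ∈ I₁` and lift `r`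
to `p = X q + p₀` with `p₀ ∈ A`. Then `p X ∈ a[X] + (X² - f)`, and the `X`-coefficient of any element
of that ideal lies in `a` (again because `f ∈ a`); this coefficient is `p₀`, so `r ∈ I₁ + (t) = I₂`.
-/

open Polynomial

section

variable {A : Type*} [CommRing A] {f : A} {a : Ideal A}

local notation "π" => Ideal.Quotient.mk (Ideal.span {(X : A[X]) ^ 2 - C f})

theorem Polynomial.coeff_one_mem_of_mem_map_C_sup_span (hf : f ∈ a) {q : A[X]}
    (hq : q ∈ a.map C ⊔ Ideal.span {X ^ 2 - C f}) : q.coeff 1 ∈ a := by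
  obtain ⟨u, hu, v, hv, rfl⟩ := Submodule.mem_sup.mp hq
  obtain ⟨w, rfl⟩ := Ideal.mem_span_singleton'.mp hv
  have hw : (w * (X ^ 2 - C f)).coeff 1 = -(w.coeff 1 * f) := by
    simp [mul_sub, coeff_mul_X_pow', coeff_mul_C]
  rw [coeff_add, hw]
  exact add_mem (Ideal.mem_map_C_iff.mp hu 1) (neg_mem (a.mul_mem_left _ hf))

theorem mem_sup_span_mk_X_of_mul_mk_X_mem (hf : f ∈ a) {r : A[X] ⧸ Ideal.span {X ^ 2 - C f}}
    (hr : r * π X ∈ (a.map C).map π) : r ∈ (a.map C).map π ⊔ Ideal.span {π X} := by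
  obtain ⟨p, rfl⟩ := Ideal.Quotient.mk_surjective r
  have hpX : p * X ∈ a.map C ⊔ Ideal.span {X ^ 2 - C f} := by
    rwa [← map_mul, ← Ideal.mem_comap,
      Ideal.comap_map_of_surjective' _ Ideal.Quotient.mk_surjective, Ideal.mk_ker] at hr
  have hp0 : p.coeff 0 ∈ a := by
    simpa using coeff_one_mem_of_mem_map_C_sup_span hf hpX
  rw [← X_mul_divX_add p, map_add, map_mul, add_comm]
  exact add_mem (Ideal.mem_sup_left (Ideal.mem_map_of_mem _ (Ideal.mem_map_of_mem _ hp0)))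
    (Ideal.mem_sup_right (Ideal.mul_mem_right _ _ (Ideal.mem_span_singleton_self _)))

theorem mk_X_mul_mk_X : π X * π X = π (C f) := by
  rw [← map_mul, Ideal.Quotient.eq]
  exact Ideal.subset_span (by rw [sq]; rfl)

theorem sup_span_mk_X_mul_self_le (hf : f ∈ a) :
    ((a.map C).map π ⊔ Ideal.span {π X}) * ((a.map C).map π ⊔ Ideal.span {π X}) ≤
      (a.map C).map π := by
  have hXX : Ideal.span {π X} * Ideal.span {π X} ≤ (a.map C).map π := by
    rw [Ideal.span_singleton_mul_span_singleton, Ideal.span_singleton_le_iff_mem, mk_X_mul_mk_X]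
    exact Ideal.mem_map_of_mem _ (Ideal.mem_map_of_mem _ hf)
  rw [Ideal.sup_mul, Ideal.mul_sup, Ideal.mul_sup]
  exact sup_le (sup_le Ideal.mul_le_right Ideal.mul_le_left) (sup_le Ideal.mul_le_right hXX)

theorem colon_map_C_sup_span_mk_X (hf : f ∈ a) :
    ((a.map C).map π).colon ↑((a.map C).map π ⊔ Ideal.span {π X}) =
      (a.map C).map π ⊔ Ideal.span {π X} := by
  refine le_antisymm (fun r hr => ?_) (fun r hr => ?_)
  · refine mem_sup_span_mk_X_of_mul_mk_X_mem hf ?_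
    have hX : π X ∈ (a.map C).map π ⊔ Ideal.span {π X} :=
      Ideal.mem_sup_right (Ideal.mem_span_singleton_self _)
    simpa using Submodule.mem_colon.mp hr _ hX
  · exact Submodule.mem_colon.mpr fun s hs =>
      sup_span_mk_X_mul_self_le hf (Ideal.mul_mem_mul hr hs)

end

/-- Let `R = ℂ[x,y][t]/(t² - f)` and `f ∈ (f₁, f₂)` in `ℂ[x,y]`.  With
`I₁ = (f₁, f₂)` and `I₂ = (f₁, f₂, t)` as ideals of `R`, the colon ideal
`[I₁ : I₂]` equals `(f₁, f₂, t)`. -/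
theorem stmt_1 (f f₁ f₂ : MvPolynomial (Fin 2) ℂ)
    (hf : f ∈ Ideal.span ({f₁, f₂} : Set (MvPolynomial (Fin 2) ℂ)))
    (J : Ideal (Polynomial (MvPolynomial (Fin 2) ℂ)))
    (hJ : J = Ideal.span {(X : Polynomial (MvPolynomial (Fin 2) ℂ)) ^ 2 - Polynomial.C f})
    (I₁ I₂ : Ideal (Polynomial (MvPolynomial (Fin 2) ℂ) ⧸ J))
    (hI₁ : I₁ = Ideal.span {Ideal.Quotient.mk J (Polynomial.C f₁),
        Ideal.Quotient.mk J (Polynomial.C f₂)})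
    (hI₂ : I₂ = Ideal.span {Ideal.Quotient.mk J (Polynomial.C f₁),
        Ideal.Quotient.mk J (Polynomial.C f₂), Ideal.Quotient.mk J X}) :
    I₁.colon I₂ = I₂ := by
  subst hJ hI₁ hI₂
  have hI₁ : Ideal.span {Ideal.Quotient.mk _ (C f₁), Ideal.Quotient.mk _ (C f₂)} =
      ((Ideal.span {f₁, f₂}).map C).map (Ideal.Quotient.mk (Ideal.span {X ^ 2 - C f})) := by
    simp only [Ideal.map_span, Set.image_insert_eq, Set.image_singleton]
  have hI₂ : Ideal.span {Ideal.Quotient.mk _ (C f₁), Ideal.Quotient.mk _ (C f₂),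
      Ideal.Quotient.mk (Ideal.span {X ^ 2 - C f}) X} =
      Ideal.span {Ideal.Quotient.mk _ (C f₁), Ideal.Quotient.mk _ (C f₂)} ⊔
        Ideal.span {Ideal.Quotient.mk _ X} := by
    rw [← Ideal.span_union, Set.insert_union, Set.singleton_union]
  rw [hI₂, hI₁]
  exact colon_map_C_sup_span_mk_X hf
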